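/- arXiv:1111.6827 — 2 statements merged into one kernel-verified Lean document; each statement's English description precedes it below -/
import Mathlib

section
/- Let $j_1, j_2, \ell_1, \ell_2$ be integers with $j_1 + 2j_2 = \ell_1 + 2\ell_2$, $j_1^2 + 2j_2^2 = \ell_1^2 + 2\ell_2^2$, and all four integers pairwise distinct. Then $3 \mid (j_2 - j_1)$, and writing $j_1 = n$, $j_2 = n + 3k$ with $k \neq 0$, one has $\ell_1 = n + 4k$ and $\ell_2 = n + k$. -/
theorem stmt5 (j1 j2 l1 l2 : ℤ)
    (hsum : j1 + 2 * j2 = l1 + 2 * l2)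
    (hsq : j1^2 + 2 * j2^2 = l1^2 + 2 * l2^2)
    (h12 : j1 ≠ j2) (h1l1 : j1 ≠ l1) (h1l2 : j1 ≠ l2)
    (h2l1 : j2 ≠ l1) (h2l2 : j2 ≠ l2) (hl : l1 ≠ l2) :
    3 ∣ (j2 - j1) ∧
      ∃ k : ℤ, k ≠ 0 ∧ j2 = j1 + 3 * k ∧ l1 = j1 + 4 * k ∧ l2 = j1 + k := by
  have hl1 : l1 = j1 + 2*j2 - 2*l2 := by linarith
  subst hl1
  have hkey : (j2 - l2) * (2*(3*l2 - 2*j1 - j2)) = 0 := by linear_combination hsq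
  have hne : j2 - l2 ≠ 0 := sub_ne_zero.mpr h2l2
  have h2 : 3*l2 - 2*j1 - j2 = 0 := by
    rcases mul_eq_zero.mp hkey with h | h
    · exact absurd h hne
    · omega
  refine ⟨⟨l2 - j1, by omega⟩, l2 - j1, ?_, by omega, by omega, by omega⟩
  intro h
  apply h1l2; omega
end

section
/- For the resonant set $\mathcal{A} = \{a_2, a_1, b_2, b_1\} = \{n, n+3k, n+4k, n+k\}$, the quantities $K_1 = I_{a_1} + I_{b_1}$, $K_2 = I_{a_2} + I_{b_2}$, and $K_{1/2} = I_{b_2} + \tfrac{1}{2} I_{a_1}$ are constants of motion of the Hamiltonian system generated by $\widehat{H} = \sum_{j \in \mathcal{A}} j^2 I_j + 6J^3 - 9J\sum_{k \in \mathcal{A}} I_k^2 + 4\sum_{k \in \mathcal{A}} I_k^3 + 18 I_{a_2}^{1/2} I_{b_2}^{1/2} I_{a_1} I_{b_1} \cos(2\phi_0)$, where $\phi_0 = \theta_{a_1} - \theta_{b_1} + \tfrac{1}{2}\theta_{a_2} - \tfrac{1}{2}\theta_{b_2}$; i.e., their Poisson brackets with $\widehat{H}$ vanish. -/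
open Real

/-- Canonical Poisson bracket of two functions of angle-action variables
`(θ, I) ∈ ℝ⁴ × ℝ⁴` : `{f,g} = ∑ⱼ (∂f/∂θⱼ ∂g/∂Iⱼ - ∂f/∂Iⱼ ∂g/∂θⱼ)`. -/
noncomputable def poissonBracket (f g : (Fin 4 → ℝ) → (Fin 4 → ℝ) → ℝ)
    (θ I : Fin 4 → ℝ) : ℝ :=
  ∑ j : Fin 4,
    (deriv (fun t => f (Function.update θ j t) I) (θ j) *
        deriv (fun t => g θ (Function.update I j t)) (I j) -
      deriv (fun t => f θ (Function.update I j t)) (I j) *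
        deriv (fun t => g (Function.update θ j t) I) (θ j))

/-- The reduced Hamiltonian `Ĥ` on the resonant set
`𝒜 = {a₂, a₁, b₂, b₁} = {n, n+3k, n+4k, n+k}`, with index convention
`0 = a₁, 1 = b₁, 2 = b₂, 3 = a₂`. -/
noncomputable def Hhat (n k : ℤ) (θ I : Fin 4 → ℝ) : ℝ :=
  ((n + 3 * k : ℤ) : ℝ)^2 * I 0 + ((n + k : ℤ) : ℝ)^2 * I 1 +
    ((n + 4 * k : ℤ) : ℝ)^2 * I 2 + ((n : ℤ) : ℝ)^2 * I 3 +
    6 * (∑ s : Fin 4, I s)^3 - 9 * (∑ s : Fin 4, I s) * (∑ s : Fin 4, (I s)^2) +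
    4 * (∑ s : Fin 4, (I s)^3) +
    18 * Real.sqrt (I 3) * Real.sqrt (I 2) * I 0 * I 1 *
      Real.cos (2 * (θ 0 - θ 1 + (1/2) * θ 3 - (1/2) * θ 2))

/-- The part of `Ĥ` that does not depend on the angles. -/
noncomputable def Cbase (n k : ℤ) (I : Fin 4 → ℝ) : ℝ :=
  ((n + 3 * k : ℤ) : ℝ)^2 * I 0 + ((n + k : ℤ) : ℝ)^2 * I 1 +
    ((n + 4 * k : ℤ) : ℝ)^2 * I 2 + ((n : ℤ) : ℝ)^2 * I 3 +
    6 * (∑ s : Fin 4, I s)^3 - 9 * (∑ s : Fin 4, I s) * (∑ s : Fin 4, (I s)^2) +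
    4 * (∑ s : Fin 4, (I s)^3)

lemma key (C c a b x : ℝ) (f : ℝ → ℝ) (hf : ∀ t, f t = C + c * Real.cos (a * t + b)) :
    deriv f x = -(c * a) * Real.sin (a * x + b) := by
  have h1 : HasDerivAt (fun t : ℝ => a * t + b) a x := by
    simpa using ((hasDerivAt_id x).const_mul a).add_const b
  have hd : HasDerivAt (fun t => C + c * Real.cos (a * t + b))
      (c * (-Real.sin (a * x + b) * a)) x := (h1.cos.const_mul c).const_add C
  rw [funext hf, hd.deriv]; ring

theorem stmt15 (n k : ℤ) (hk : k ≠ 0) (θ I : Fin 4 → ℝ) :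
    poissonBracket (fun _ I => I 0 + I 1) (Hhat n k) θ I = 0 ∧
    poissonBracket (fun _ I => I 3 + I 2) (Hhat n k) θ I = 0 ∧
    poissonBracket (fun _ I => I 2 + (1/2) * I 0) (Hhat n k) θ I = 0 := by
  have h0 : deriv (fun t => Hhat n k (Function.update θ 0 t) I) (θ 0) =
      -((18 * Real.sqrt (I 3) * Real.sqrt (I 2) * I 0 * I 1) * 2) *
        Real.sin (2 * θ 0 + (θ 3 - θ 2 - 2 * θ 1)) := by
    refine key (Cbase n k I) _ 2 (θ 3 - θ 2 - 2 * θ 1) (θ 0) _ (fun t => ?_)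
    simp only [Hhat, Cbase, Function.update_apply, Fin.reduceEq, if_true, if_false, reduceIte]
    norm_num; ring_nf; tauto
  have h1 : deriv (fun t => Hhat n k (Function.update θ 1 t) I) (θ 1) =
      -((18 * Real.sqrt (I 3) * Real.sqrt (I 2) * I 0 * I 1) * (-2)) *
        Real.sin ((-2) * θ 1 + (2 * θ 0 + θ 3 - θ 2)) := by
    refine key (Cbase n k I) _ (-2) (2 * θ 0 + θ 3 - θ 2) (θ 1) _ (fun t => ?_)
    simp only [Hhat, Cbase, Function.update_apply, Fin.reduceEq, if_true, if_false, reduceIte]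
    norm_num; ring_nf; tauto
  have h2 : deriv (fun t => Hhat n k (Function.update θ 2 t) I) (θ 2) =
      -((18 * Real.sqrt (I 3) * Real.sqrt (I 2) * I 0 * I 1) * (-1)) *
        Real.sin ((-1) * θ 2 + (2 * θ 0 - 2 * θ 1 + θ 3)) := by
    refine key (Cbase n k I) _ (-1) (2 * θ 0 - 2 * θ 1 + θ 3) (θ 2) _ (fun t => ?_)
    simp only [Hhat, Cbase, Function.update_apply, Fin.reduceEq, if_true, if_false, reduceIte]
    norm_num; ring_nf; tauto
  have h3 : deriv (fun t => Hhat n k (Function.update θ 3 t) I) (θ 3) =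
      -((18 * Real.sqrt (I 3) * Real.sqrt (I 2) * I 0 * I 1) * 1) *
        Real.sin (1 * θ 3 + (2 * θ 0 - 2 * θ 1 - θ 2)) := by
    refine key (Cbase n k I) _ 1 (2 * θ 0 - 2 * θ 1 - θ 2) (θ 3) _ (fun t => ?_)
    simp only [Hhat, Cbase, Function.update_apply, Fin.reduceEq, if_true, if_false, reduceIte]
    norm_num; ring_nf; tauto
  have d1 : deriv (fun t => I 0 + t) (I 1) = 1 := by
    simpa using ((hasDerivAt_id (I 1)).const_add (I 0)).deriv
  have d2 : deriv (fun t => I 3 + t) (I 2) = 1 := by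
    simpa using ((hasDerivAt_id (I 2)).const_add (I 3)).deriv
  have d3 : deriv (fun t : ℝ => 1/2 * t) (I 0) = 1/2 := by
    simpa using ((hasDerivAt_id (I 0)).const_mul (1/2 : ℝ)).deriv
  refine ⟨?_, ?_, ?_⟩ <;>
  · simp only [poissonBracket, Fin.sum_univ_four, h0, h1, h2, h3, Function.update_apply,
      Fin.reduceEq, if_true, if_false, reduceIte]
    norm_num [deriv_add_const', deriv_const_add', deriv_id'', deriv_const',
      deriv_const_mul_field, d1, d2, d3]
    ring_nf
end
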